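/- arXiv:1404.4487 — 3 statements merged into one kernel-verified Lean document; each statement's English description precedes it below -/
import Mathlib

section
/- Let γ be a hyperbolic isometry of the upper half-plane whose axis is the Euclidean semicircle of radius r > 0 centered at the origin, with translation length d along its axis. If θ ∈ (0, π/2) denotes the angle such that sinh(d/2) = tan θ, then the Euclidean radius R of the isometric circle of γ satisfies r = R tan θ; equivalently R = r / sinh(d/2). -/
/-! A hyperbolic `γ` fixing `±r` has the form `z ↦ (az + cr²)/(cz + a)`, so
`cosh² (D/2) - 1 = a² - 1 = bc = c²r²` by the determinant condition. Hence
`sinh (D/2) = |c| r = r / R`. -/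

theorem Real.sinh_eq_of_cosh_sq_eq_one_add_sq {x s : ℝ} (hx : 0 ≤ x) (hs : 0 ≤ s)
    (h : Real.cosh x ^ 2 = 1 + s ^ 2) : Real.sinh x = s := by
  have hsq : Real.sinh x ^ 2 = s ^ 2 := by rw [Real.sinh_sq, h]; ring
  exact (pow_left_inj₀ (Real.sinh_nonneg_iff.2 hx) hs two_ne_zero).1 hsq

theorem eq_and_eq_mul_sq_of_fixes_self_and_neg {a b c d r : ℝ} (hr : r ≠ 0)
    (hfix1 : a * r + b = r * (c * r + d))
    (hfix2 : a * (-r) + b = (-r) * (c * (-r) + d)) :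
    a = d ∧ b = c * r ^ 2 := by
  have had : (a - d) * r = 0 := by linear_combination (hfix1 - hfix2) / 2
  refine ⟨sub_eq_zero.1 ((mul_eq_zero.1 had).resolve_right hr), ?_⟩
  linear_combination (hfix1 + hfix2) / 2

theorem half_trace_sq_eq_one_add_sq {a b c r : ℝ} (hdet : a * a - b * c = 1)
    (hb : b = c * r ^ 2) : (|a + a| / 2) ^ 2 = 1 + (|c| * r) ^ 2 := by
  rw [div_pow, sq_abs, mul_pow, sq_abs]
  linear_combination hdet + c * hb

theorem isometric_circle_radius_of_axis_general (a b c d r D θ : ℝ)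
    (hdet : a * d - b * c = 1) (hc : c ≠ 0) (hr : 0 < r)
    (hfix1 : a * r + b = r * (c * r + d))
    (hfix2 : a * (-r) + b = (-r) * (c * (-r) + d))
    (hD : 0 < D) (htrace : Real.cosh (D / 2) = |a + d| / 2)
    (hθD : Real.sinh (D / 2) = Real.tan θ) :
    r = (1 / |c|) * Real.tan θ ∧ 1 / |c| = r / Real.sinh (D / 2) := by
  obtain ⟨rfl, hb⟩ := eq_and_eq_mul_sq_of_fixes_self_and_neg hr.ne' hfix1 hfix2
  have hsinh : Real.sinh (D / 2) = |c| * r :=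
    Real.sinh_eq_of_cosh_sq_eq_one_add_sq (by positivity) (by positivity)
      (htrace ▸ half_trace_sq_eq_one_add_sq hdet hb)
  have hc' : |c| ≠ 0 := abs_ne_zero.2 hc
  constructor
  · rw [← hθD, hsinh]; field_simp
  · rw [hsinh]; field_simp

/-- Let `γ(z) = (az+b)/(cz+d)` be a hyperbolic isometry of the upper half-plane whose axis is
the semicircle of radius `r > 0` centered at `0` (i.e. `γ` fixes `±r`), with translation
length `D` (so `cosh(D/2) = |a+d|/2`).  If `θ ∈ (0, π/2)` satisfies `sinh(D/2) = tan θ`,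
then the radius `R = 1/|c|` of the isometric circle of `γ` satisfies `r = R·tan θ`;
equivalently `R = r / sinh(D/2)`. -/
theorem isometric_circle_radius_of_axis (a b c d r D θ : ℝ)
    (hdet : a * d - b * c = 1) (hc : c ≠ 0) (hr : 0 < r)
    (hfix1 : a * r + b = r * (c * r + d))
    (hfix2 : a * (-r) + b = (-r) * (c * (-r) + d))
    (hD : 0 < D) (htrace : Real.cosh (D / 2) = |a + d| / 2)
    (hθ : θ ∈ Set.Ioo 0 (Real.pi / 2)) (hθD : Real.sinh (D / 2) = Real.tan θ) :
    r = (1 / |c|) * Real.tan θ ∧ 1 / |c| = r / Real.sinh (D / 2) :=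
  isometric_circle_radius_of_axis_general a b c d r D θ hdet hc hr hfix1 hfix2 hD htrace hθD
end

section
/- Let Γ be a Fuchsian group containing the parabolic T(z) = z + ω (ω > 0), such that the horodisc B = {z : Im z > 1} satisfies γ(B) ∩ B = ∅ for all γ ∈ Γ not fixing ∞. Let γ ∈ Γ be a hyperbolic element whose axis is the semicircle of radius r centered at 0 and which enters B (so r > 1). Then for any z₀ with Im(z₀) ≥ √3, one has sinh(d(z₀, γ·z₀)/2) > 2/√3. -/
/-!
For `g = [[a, b], [c, d]] ∈ SL(2, ℝ)` one has `z - g z = (c z² + (d - a) z - b) / (c z + d)` and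
`Im (g z) = Im z / |c z + d|²`, so `sinh (d(z, g z) / 2) = |c z² + (d - a) z - b| / (2 Im z)`.
If `g` fixes `±r` this is `|c| |z² - r²| / (2 Im z)`. Disjointness of the horodisc from its image
forces the isometric circle to have radius `1 / |c| ≤ 1`, and
`|z² - r²|² = (|z|² - r²)² + 4 r² (Im z)² > 16 (Im z)² / 3` once `Im z ≥ √3` and `r > 1`.
-/
open Real
open scoped MatrixGroups UpperHalfPlane

namespace UpperHalfPlane

variable (g : SL(2, ℝ)) (z : ℍ)

lemma denom_specialLinearGroup_ne_zero : (g 1 0 * z + g 1 1 : ℂ) ≠ 0 := by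
  simpa [denom] using denom_ne_zero g z

lemma coe_sub_coe_specialLinearGroup_smul :
    (z : ℂ) - ↑(g • z) =
      (g 1 0 * z ^ 2 + (g 1 1 - g 0 0) * z - g 0 1) / (g 1 0 * z + g 1 1) := by
  have h := denom_specialLinearGroup_ne_zero g z
  rw [coe_specialLinearGroup_apply, eq_div_iff h, sub_mul]
  simp only [Algebra.algebraMap_self, RingHom.id_apply, div_mul_cancel₀ _ h]
  ring

lemma im_specialLinearGroup_smul :
    (g • z).im = z.im / Complex.normSq (g 1 0 * z + g 1 1) := by
  rw [MulAction.compHom_smul_def, im_smul_eq_div_normSq]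
  simp [denom]

lemma sinh_half_dist_specialLinearGroup_smul :
    sinh (dist z (g • z) / 2) =
      ‖(g 1 0 * z ^ 2 + (g 1 1 - g 0 0) * z - g 0 1 : ℂ)‖ / (2 * z.im) := by
  have hN : 0 < ‖(g 1 0 * z + g 1 1 : ℂ)‖ := norm_pos_iff.2 (denom_specialLinearGroup_ne_zero g z)
  have hsqrt : √(z.im * (g • z).im) = z.im / ‖(g 1 0 * z + g 1 1 : ℂ)‖ := by
    rw [im_specialLinearGroup_smul, ← Complex.sq_norm, ← mul_div_assoc, ← sq,
      Real.sqrt_div' _ (sq_nonneg _), Real.sqrt_sq z.im_pos.le, Real.sqrt_sq hN.le]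
  rw [sinh_half_dist, hsqrt, Complex.dist_eq, coe_sub_coe_specialLinearGroup_smul, norm_div]
  field_simp

variable {g} in
lemma one_le_abs_of_forall_im_smul_le_one (hc : g 1 0 ≠ 0)
    (h : ∀ z : ℍ, 1 < z.im → (g • z).im ≤ 1) : 1 ≤ |g 1 0| := by
  by_contra! hlt
  have hpos : 0 < |g 1 0| := abs_pos.2 hc
  -- the top of the isometric circle `|c z + d| = 1` keeps its height
  let z : ℍ := ⟨⟨-g 1 1 / g 1 0, 1 / |g 1 0|⟩, by simpa using hpos⟩
  have hz : 1 < z.im := by simpa [z] using (one_lt_div hpos).2 hlt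
  have hN : Complex.normSq (g 1 0 * z + g 1 1) = 1 := by
    rw [Complex.normSq_apply]
    simp only [one_div, Complex.add_re, Complex.mul_re, Complex.ofReal_re, Complex.ofReal_im,
      zero_mul, sub_zero, Complex.add_im, Complex.mul_im, add_zero, z]
    field_simp
    simp [sq_abs]
  have := h z hz
  rw [im_specialLinearGroup_smul, hN, div_one] at this
  linarith

end UpperHalfPlane

lemma two_div_sqrt_three_lt_norm_sq_sub_sq_div {z : ℂ} (hz : √3 ≤ z.im) {r : ℝ} (hr : 1 < r) :
    2 / √3 < ‖z ^ 2 - r ^ 2‖ / (2 * z.im) := by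
  have hy : 0 < z.im := lt_of_lt_of_le (by positivity) hz
  have hy3 : 3 ≤ z.im ^ 2 := by simpa using pow_le_pow_left₀ (by positivity) hz 2
  have hnorm : ‖z ^ 2 - r ^ 2‖ ^ 2 = (‖z‖ ^ 2 - r ^ 2) ^ 2 + 4 * r ^ 2 * z.im ^ 2 := by
    rw [Complex.sq_norm, Complex.sq_norm, Complex.normSq_apply, Complex.normSq_apply]
    simp only [Complex.sub_re, Complex.sub_im, pow_two, Complex.mul_re, Complex.mul_im,
      Complex.ofReal_re, Complex.ofReal_im]
    ring
  have hzy : z.im ^ 2 ≤ ‖z‖ ^ 2 := by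
    rw [Complex.sq_norm, Complex.normSq_apply]; nlinarith [mul_self_nonneg z.re]
  have key : 16 * z.im ^ 2 / 3 < ‖z ^ 2 - r ^ 2‖ ^ 2 := by
    have hr2 : 1 < r ^ 2 := by nlinarith
    rw [hnorm]
    rcases le_or_gt (z.im ^ 2) (r ^ 2) with h | h
    · nlinarith [sq_nonneg (‖z‖ ^ 2 - r ^ 2)]
    · have : (z.im ^ 2 - r ^ 2) ^ 2 ≤ (‖z‖ ^ 2 - r ^ 2) ^ 2 :=
        pow_le_pow_left₀ (by linarith) (by linarith) 2
      nlinarith [mul_nonneg (by linarith : (0:ℝ) ≤ z.im ^ 2 - 3)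
        (by linarith : (0:ℝ) ≤ 3 * z.im ^ 2 - 1)]
  rw [div_lt_div_iff₀ (by positivity) (by positivity)]
  refine (pow_lt_pow_iff_left₀ (by positivity) (by positivity) two_ne_zero).1 ?_
  rw [mul_pow, mul_pow, mul_pow, sq_sqrt (by norm_num)]
  linarith

theorem displacement_lower_bound_general (Γ : Subgroup (Matrix.SpecialLinearGroup (Fin 2) ℝ))
    (hdisj : ∀ g ∈ Γ, g.1 1 0 ≠ 0 → ∀ z : UpperHalfPlane, 1 < z.im → (g • z).im ≤ 1)
    (g : Matrix.SpecialLinearGroup (Fin 2) ℝ) (hg : g ∈ Γ) (hgc : g.1 1 0 ≠ 0)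
    (r : ℝ) (hr : 1 < r)
    (hfix1 : g.1 0 0 * r + g.1 0 1 = r * (g.1 1 0 * r + g.1 1 1))
    (hfix2 : g.1 0 0 * (-r) + g.1 0 1 = (-r) * (g.1 1 0 * (-r) + g.1 1 1))
    (z₀ : UpperHalfPlane) (hz₀ : Real.sqrt 3 ≤ z₀.im) :
    2 / Real.sqrt 3 < Real.sinh (dist z₀ (g • z₀) / 2) := by
  have hd : g 1 1 = g 0 0 :=
    (mul_left_cancel₀ (by positivity : r ≠ 0) (by linarith : r * g 1 1 = r * g 0 0))
  have hb : g 0 1 = g 1 0 * r ^ 2 := by linarith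
  have hpoly : (g 1 0 * z₀ ^ 2 + (g 1 1 - g 0 0) * z₀ - g 0 1 : ℂ) =
      g 1 0 * ((z₀ : ℂ) ^ 2 - r ^ 2) := by
    rw [hd, hb]; push_cast; ring
  rw [UpperHalfPlane.sinh_half_dist_specialLinearGroup_smul, hpoly, norm_mul, Complex.norm_real,
    Real.norm_eq_abs, mul_div_assoc]
  calc 2 / √3 < ‖(z₀ : ℂ) ^ 2 - r ^ 2‖ / (2 * z₀.im) :=
        two_div_sqrt_three_lt_norm_sq_sub_sq_div hz₀ hr
    _ ≤ |g 1 0| * (‖(z₀ : ℂ) ^ 2 - r ^ 2‖ / (2 * z₀.im)) :=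
        le_mul_of_one_le_left (by positivity)
          (UpperHalfPlane.one_le_abs_of_forall_im_smul_le_one hgc (hdisj g hg hgc))

/-- Let `Γ` be a Fuchsian (discrete) group containing the parabolic `T(z) = z + ω` (`ω > 0`),
such that the horodisc `B = {Im z > 1}` satisfies `γ(B) ∩ B = ∅` for all `γ ∈ Γ` not fixing
`∞`.  If `g ∈ Γ` is a hyperbolic element whose axis is the semicircle of radius `r` centered
at `0` (i.e. `g` fixes `±r`) entering `B` (so `r > 1`), then for any `z₀` with `Im z₀ ≥ √3`
one has `sinh(dist(z₀, g·z₀)/2) > 2/√3`. -/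
theorem displacement_lower_bound (Γ : Subgroup (Matrix.SpecialLinearGroup (Fin 2) ℝ))
    (hdiscrete : DiscreteTopology
      ((Subtype.val '' (Γ : Set (Matrix.SpecialLinearGroup (Fin 2) ℝ))) :
        Set (Matrix (Fin 2) (Fin 2) ℝ)))
    (ω : ℝ) (hω : 0 < ω)
    (T : Matrix.SpecialLinearGroup (Fin 2) ℝ) (hT : T.1 = !![1, ω; 0, 1]) (hTΓ : T ∈ Γ)
    (hdisj : ∀ g ∈ Γ, g.1 1 0 ≠ 0 → ∀ z : UpperHalfPlane, 1 < z.im → (g • z).im ≤ 1)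
    (g : Matrix.SpecialLinearGroup (Fin 2) ℝ) (hg : g ∈ Γ) (hgc : g.1 1 0 ≠ 0)
    (hhyp : 2 < |g.1 0 0 + g.1 1 1|)
    (r : ℝ) (hr : 1 < r)
    (hfix1 : g.1 0 0 * r + g.1 0 1 = r * (g.1 1 0 * r + g.1 1 1))
    (hfix2 : g.1 0 0 * (-r) + g.1 0 1 = (-r) * (g.1 1 0 * (-r) + g.1 1 1))
    (z₀ : UpperHalfPlane) (hz₀ : Real.sqrt 3 ≤ z₀.im) :
    2 / Real.sqrt 3 < Real.sinh (dist z₀ (g • z₀) / 2) :=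
  displacement_lower_bound_general Γ hdisj g hg hgc r hr hfix1 hfix2 z₀ hz₀
end

section
/- Let Γ be a Fuchsian group with parabolic stabilizer of ∞ generated by z ↦ z + ω (ω > 0), and suppose {z : Im z > 1} projects injectively (modulo the stabilizer) to a cusp region. Then any complete geodesic of ℍ that projects to a simple closed geodesic on ℍ/Γ does not enter the horodisc {z : Im z > √(1 + ω²/4)}. -/
/-!
Apply simplicity to the translation `T : z ↦ z + ω`: the semicircle of
radius `ρ` about `m` and its translate about `m + ω` are distinct, hence disjoint, and two
semicircles of equal radius whose centres are less than `2ρ` apart meet above the midpoint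
of the centres. So `ρ ≤ ω / 2`, and every point of the geodesic has height at most
`ρ ≤ ω / 2 < √(1 + ω² / 4)`.
-/

open scoped Pointwise

namespace UpperHalfPlane

theorem specialLinearGroup_smul_eq_vadd {ω : ℝ} {T : Matrix.SpecialLinearGroup (Fin 2) ℝ}
    (hT : T.1 = !![1, ω; 0, 1]) (z : ℍ) : T • z = ω +ᵥ z := by
  ext1
  rw [coe_specialLinearGroup_apply, coe_vadd]
  simp [hT, add_comm]

/-- The complete geodesic of `ℍ` with endpoints `m - ρ` and `m + ρ`. -/
def semicircle (m ρ : ℝ) : Set ℍ := {z : ℍ | ‖(z : ℂ) - m‖ = ρ}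

theorem mem_semicircle_iff {m ρ : ℝ} (hρ : 0 ≤ ρ) {z : ℍ} :
    z ∈ semicircle m ρ ↔ (z.re - m) ^ 2 + z.im ^ 2 = ρ ^ 2 := by
  rw [semicircle, Set.mem_ofPred_eq, ← sq_eq_sq₀ (norm_nonneg _) hρ, Complex.sq_norm,
    Complex.normSq_apply]
  simp only [Complex.sub_re, Complex.sub_im, coe_re, coe_im, Complex.ofReal_re,
    Complex.ofReal_im, sub_zero, sq]

theorem im_le_of_mem_semicircle {m ρ : ℝ} {z : ℍ} (hz : z ∈ semicircle m ρ) : z.im ≤ ρ :=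
  calc z.im = ((z : ℂ) - m).im := by simp
    _ ≤ ‖(z : ℂ) - m‖ := (le_abs_self _).trans (Complex.abs_im_le_norm _)
    _ = ρ := hz

theorem vadd_semicircle (ω m ρ : ℝ) : ω +ᵥ semicircle m ρ = semicircle (m + ω) ρ := by
  ext z
  simp only [Set.mem_vadd_set_iff_neg_vadd_mem, semicircle, Set.mem_ofPred_eq, coe_vadd]
  push_cast
  ring_nf

theorem semicircle_injective_center {m m' ρ : ℝ} (hρ : 0 < ρ)
    (h : semicircle m ρ = semicircle m' ρ) : m = m' := by
  let top : ℍ := ⟨m + ρ * Complex.I, by simpa using hρ⟩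
  have htop : top ∈ semicircle m' ρ := by
    rw [← h, mem_semicircle_iff hρ.le]
    simp [top]
  rw [mem_semicircle_iff hρ.le] at htop
  simp only [top, re, im, Complex.add_re, Complex.add_im, Complex.ofReal_re, Complex.ofReal_im,
    Complex.mul_re, Complex.mul_im, Complex.I_re, Complex.I_im] at htop
  nlinarith [sq_nonneg (m - m')]

theorem semicircle_inter_nonempty {m m' ρ : ℝ} (h : |m' - m| < 2 * ρ) :
    (semicircle m ρ ∩ semicircle m' ρ).Nonempty := by
  have hρ : 0 ≤ ρ := by linarith [abs_nonneg (m' - m)]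
  have hpos : 0 < ρ ^ 2 - ((m' - m) / 2) ^ 2 := by
    nlinarith [abs_nonneg (m' - m), sq_abs (m' - m)]
  have hy := Real.sq_sqrt hpos.le
  let z : ℍ := ⟨(m + m') / 2 + √(ρ ^ 2 - ((m' - m) / 2) ^ 2) * Complex.I,
    by simpa using Real.sqrt_pos.mpr hpos⟩
  refine ⟨z, ?_, ?_⟩ <;> rw [mem_semicircle_iff hρ] <;> simp [z] <;> linarith

theorem radius_le_half_of_vadd_semicircle {ω m ρ : ℝ} (hω : 0 < ω) (hρ : 0 < ρ)
    (h : ω +ᵥ semicircle m ρ = semicircle m ρ ∨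
      Disjoint (ω +ᵥ semicircle m ρ) (semicircle m ρ)) :
    ρ ≤ ω / 2 := by
  rw [vadd_semicircle] at h
  rcases h with heq | hdisj
  · linarith [semicircle_injective_center hρ heq]
  · by_contra! hlt
    obtain ⟨z, hz, hz'⟩ := semicircle_inter_nonempty (m := m + ω) (m' := m) (ρ := ρ)
      (by rw [abs_of_neg (by linarith)]; linarith)
    exact Set.disjoint_left.mp hdisj hz hz'

end UpperHalfPlane

theorem simple_geodesic_avoids_cusp_general (Γ : Subgroup (Matrix.SpecialLinearGroup (Fin 2) ℝ))
    (ω : ℝ) (hω : 0 < ω)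
    (T : Matrix.SpecialLinearGroup (Fin 2) ℝ) (hT : T.1 = !![1, ω; 0, 1]) (hTΓ : T ∈ Γ)
    (m ρ : ℝ) (hρ : 0 < ρ)
    (S : Set UpperHalfPlane) (hS : S = {z : UpperHalfPlane | ‖(z : ℂ) - (m : ℂ)‖ = ρ})
    (hsimple : ∀ g ∈ Γ,
      (fun z : UpperHalfPlane => g • z) '' S = S ∨
        Disjoint ((fun z : UpperHalfPlane => g • z) '' S) S) :
    ∀ z ∈ S, z.im ≤ Real.sqrt (1 + ω ^ 2 / 4) := by
  change S = UpperHalfPlane.semicircle m ρ at hS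
  subst hS
  have hTS := hsimple T hTΓ
  simp only [UpperHalfPlane.specialLinearGroup_smul_eq_vadd hT, Set.image_vadd] at hTS
  have hradius : ρ ≤ ω / 2 := UpperHalfPlane.radius_le_half_of_vadd_semicircle hω hρ hTS
  have hhalf : ω / 2 ≤ √(1 + ω ^ 2 / 4) := Real.le_sqrt_of_sq_le (by nlinarith)
  intro z hz
  linarith [UpperHalfPlane.im_le_of_mem_semicircle hz]

/-- Let `Γ` be a Fuchsian group whose stabilizer of `∞` is generated (up to sign) by
`T : z ↦ z + ω` (`ω > 0`), and such that `{Im z > 1}` projects injectively modulo the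
stabilizer to a cusp region (any `g ∈ Γ` sending a point of `{Im z > 1}` into `{Im z > 1}`
fixes `∞`).  Then any complete geodesic of `ℍ` (a semicircle `{|z - m| = ρ}`) invariant
under some hyperbolic element of `Γ` and projecting to a *simple* closed geodesic (its
`Γ`-translates are equal to it or disjoint from it) does not enter the horodisc
`{Im z > √(1 + ω²/4)}`. -/
theorem simple_geodesic_avoids_cusp (Γ : Subgroup (Matrix.SpecialLinearGroup (Fin 2) ℝ))
    (hdiscrete : DiscreteTopology
      ((Subtype.val '' (Γ : Set (Matrix.SpecialLinearGroup (Fin 2) ℝ))) :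
        Set (Matrix (Fin 2) (Fin 2) ℝ)))
    (ω : ℝ) (hω : 0 < ω)
    (T : Matrix.SpecialLinearGroup (Fin 2) ℝ) (hT : T.1 = !![1, ω; 0, 1]) (hTΓ : T ∈ Γ)
    (hstab : ∀ g ∈ Γ, g.1 1 0 = 0 → ∃ n : ℤ, g = T ^ n ∨ g = -(T ^ n))
    (hinj : ∀ g ∈ Γ, ∀ z : UpperHalfPlane, 1 < z.im → 1 < (g • z).im → g.1 1 0 = 0)
    (m ρ : ℝ) (hρ : 0 < ρ)
    (S : Set UpperHalfPlane) (hS : S = {z : UpperHalfPlane | ‖(z : ℂ) - (m : ℂ)‖ = ρ})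
    (hclosed : ∃ h : Matrix.SpecialLinearGroup (Fin 2) ℝ, h ∈ Γ ∧
      2 < |h.1 0 0 + h.1 1 1| ∧ (fun z : UpperHalfPlane => h • z) '' S = S)
    (hsimple : ∀ g ∈ Γ,
      (fun z : UpperHalfPlane => g • z) '' S = S ∨
        Disjoint ((fun z : UpperHalfPlane => g • z) '' S) S) :
    ∀ z ∈ S, z.im ≤ Real.sqrt (1 + ω ^ 2 / 4) :=
  simple_geodesic_avoids_cusp_general Γ ω hω T hT hTΓ m ρ hρ S hS hsimple
end
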